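/- arXiv:2104.00666 — 4 statements merged into one kernel-verified Lean document; each statement's English description precedes it below -/
import Mathlib

section
/- Let E be an exact category, I a filtered category, F : I → E a functor with all transition maps admissible monomorphisms which is weakly co-flasque, and J ⊆ I a directed subcategory. Then the restriction F|_J is weakly co-flasque as a functor J → E. -/
open CategoryTheory Limits

universe v u

/-- A Quillen exact structure on an additive category: a class of kernel-cokernel pairs
("short exact sequences") satisfying (a selection of) Quillen's axioms. -/
structure ExactStr (C : Type u) [Category.{v} C] [Preadditive C] where
  ses : ∀ ⦃X Y Z : C⦄, (X ⟶ Y) → (Y ⟶ Z) → Prop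
  comp_zero : ∀ ⦃X Y Z : C⦄ ⦃f : X ⟶ Y⦄ ⦃g : Y ⟶ Z⦄, ses f g → f ≫ g = 0
  isKernel : ∀ ⦃X Y Z : C⦄ ⦃f : X ⟶ Y⦄ ⦃g : Y ⟶ Z⦄ (h : ses f g),
    Nonempty (IsLimit (KernelFork.ofι f (comp_zero h)))
  isCokernel : ∀ ⦃X Y Z : C⦄ ⦃f : X ⟶ Y⦄ ⦃g : Y ⟶ Z⦄ (h : ses f g),
    Nonempty (IsColimit (CokernelCofork.ofπ g (comp_zero h)))
  admMono_comp : ∀ ⦃X Y Z : C⦄ ⦃f : X ⟶ Y⦄ ⦃g : Y ⟶ Z⦄,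
    (∃ (W : C) (p : Y ⟶ W), ses f p) → (∃ (W : C) (p : Z ⟶ W), ses g p) →
    ∃ (W : C) (p : Z ⟶ W), ses (f ≫ g) p
  admEpi_comp : ∀ ⦃X Y Z : C⦄ ⦃f : X ⟶ Y⦄ ⦃g : Y ⟶ Z⦄,
    (∃ (W : C) (i : W ⟶ X), ses i f) → (∃ (W : C) (i : W ⟶ Y), ses i g) →
    ∃ (W : C) (i : W ⟶ X), ses i (f ≫ g)
  pushout_admMono : ∀ ⦃X Y X' Y' : C⦄ ⦃f : X ⟶ Y⦄ ⦃u : X ⟶ X'⦄ ⦃f' : X' ⟶ Y'⦄ ⦃u' : Y ⟶ Y'⦄,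
    IsPushout u f f' u' → (∃ (W : C) (p : Y ⟶ W), ses f p) →
    ∃ (W : C) (p : Y' ⟶ W), ses f' p
  pullback_admEpi : ∀ ⦃X Y X' Y' : C⦄ ⦃g : Y ⟶ X⦄ ⦃u : X' ⟶ X⦄ ⦃g' : Y' ⟶ X'⦄ ⦃u' : Y' ⟶ Y⦄,
    IsPullback u' g' g u → (∃ (W : C) (i : W ⟶ Y), ses i g) →
    ∃ (W : C) (i : W ⟶ Y'), ses i g'

namespace ExactStr

variable {C : Type u} [Category.{v} C] [Preadditive C] (E : ExactStr C)

/-- Admissible monomorphisms. -/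
def AdmMono {X Y : C} (f : X ⟶ Y) : Prop := ∃ (W : C) (p : Y ⟶ W), E.ses f p

/-- Admissible epimorphisms. -/
def AdmEpi {Y Z : C} (g : Y ⟶ Z) : Prop := ∃ (W : C) (i : W ⟶ Y), E.ses i g

/-- Weak idempotent completeness: every split monomorphism is admissible. -/
def WIC : Prop :=
  ∀ ⦃X Y : C⦄ (f : X ⟶ Y) (r : Y ⟶ X), f ≫ r = 𝟙 X → E.AdmMono f

/-- A (ℤ-indexed, homologically graded) chain complex is acyclic for the exact structure `E`
if each differential factors as an admissible epi onto `Z (n-1)` followed by an admissible mono,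
with the resulting sequences `0 → Z n → Xₙ → Z (n-1) → 0` short exact. -/
def Acyclic (X : ChainComplex C ℤ) : Prop :=
  ∃ (Z : ℤ → C) (i : ∀ n, Z n ⟶ X.X n) (p : ∀ n, X.X n ⟶ Z (n - 1)),
    (∀ n, X.d n (n - 1) = p n ≫ i (n - 1)) ∧ (∀ n, E.ses (i n) (p n))

/-- Quasi-isomorphisms of complexes in an exact category: chain maps whose
mapping cone is acyclic. -/
def QIso [HasBinaryBiproducts C] {X Y : ChainComplex C ℤ} (f : X ⟶ Y) : Prop :=
  haveI : HomologicalComplex.HasHomotopyCofiber f := ⟨fun _ _ _ => inferInstance⟩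
  E.Acyclic (HomologicalComplex.homotopyCofiber f)

end ExactStr

/-- A subset of a preorder is directed. -/
def DirectedSubset {I : Type v} [Preorder I] (J : Set I) : Prop :=
  ∀ a ∈ J, ∀ b ∈ J, ∃ c ∈ J, a ≤ c ∧ b ≤ c

/-- A direct system `F : I ⥤ E` over a directed preorder is weakly co-flasque if all its
transition maps are admissible monomorphisms and, for every directed subset `J ⊆ I`, the
canonical map `colim_J F|_J → colim_I F` is an admissible monomorphism. -/
def WeaklyCoFlasque {C : Type u} [Category.{v} C] [Preadditive C]
    [HasColimitsOfSize.{v, v} C] {I : Type v} [Preorder I]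
    (E : ExactStr C) (F : I ⥤ C) : Prop :=
  (∀ (i j : I) (h : i ≤ j), E.AdmMono (F.map (homOfLE h))) ∧
  ∀ (J : Set I), DirectedSubset J →
    E.AdmMono (colimit.pre F (Subtype.mono_coe (· ∈ J)).functor)

/-!
For `J' ⊆ J` directed, the map `colim_{J'} F → colim_I F` factors through `colim_J F`, and it is
an admissible monomorphism because `J'` is also a directed subset of `I`. Quillen's obscure axiom
then makes the first factor `colim_{J'} F → colim_J F` admissible.

The obscure axiom (Bühler, *Exact categories*, Prop. 2.16): if `f ≫ g` is admissible, pushing it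
out along `inr` and precomposing with the split monomorphism `(f, 𝟙)` makes `(f, f ≫ g)`
admissible, and a shear automorphism turns this into `(f, 0)`. The cokernel of `(f, 0)` is
`coker f ⊕ 𝟙`, whose pullback along `inl` shows that `coker f` is an admissible epimorphism;
its kernel then contains `f` as a split direct factor.
-/

section Biproducts

variable {C : Type u} [Category.{v} C] [Preadditive C] [HasBinaryBiproducts C]

lemma isPushout_inr_biprodMap (Y : C) {A B : C} (h : A ⟶ B) :
    IsPushout (biprod.inr : A ⟶ Y ⊞ A) h (biprod.map (𝟙 Y) h) biprod.inr := by
  refine IsPushout.of_isColimit (PushoutCocone.IsColimit.mk (biprod.inr_map _ _)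
    (fun s => biprod.desc (biprod.inl ≫ s.inl) s.inr) (fun s => ?_) (fun s => by simp)
    (fun s m hinl hinr => ?_))
  · ext
    · simp
    · simpa using s.condition.symm
  · ext
    · simpa using biprod.inl ≫= hinl
    · simpa using hinr

lemma isPullback_inl_biprodMap {A B : C} (h : A ⟶ B) (Z : C) :
    IsPullback (biprod.inl : A ⟶ A ⊞ Z) h (biprod.map h (𝟙 Z)) biprod.inl := by
  refine IsPullback.of_isLimit (PullbackCone.IsLimit.mk (by simp)
    (fun s => s.fst ≫ biprod.fst) (fun s => ?_) (fun s => ?_)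
    (fun s m hfst _ => by simp [← hfst]))
  all_goals
    have hsnd : s.fst ≫ biprod.snd = 0 := by
      simpa using s.condition =≫ biprod.snd
  · ext <;> simp [hsnd]
  · simpa using s.condition =≫ biprod.fst

noncomputable def isColimitCokernelCoforkBiprodMap {X Y : C} {f : X ⟶ Y} {c : CokernelCofork f}
    (hc : IsColimit c) (Z : C) :
    IsColimit (CokernelCofork.ofπ (f := f ≫ (biprod.inl : Y ⟶ Y ⊞ Z)) (biprod.map c.π (𝟙 Z))
      (by simp)) :=
  haveI : Epi c.π := epi_of_isColimit_cofork hc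
  CokernelCofork.IsColimit.ofπ' _ _ fun g hg =>
    let l := CokernelCofork.IsColimit.desc' hc (biprod.inl ≫ g) (by simpa using hg)
    ⟨biprod.desc l.1 (biprod.inr ≫ g), by ext <;> simp; exact l.2⟩

end Biproducts

namespace ExactStr

variable {C : Type u} [Category.{v} C] [Preadditive C] (E : ExactStr C)

lemma admMono_of_isIso (hwic : E.WIC) {X Y : C} (e : X ⟶ Y) [IsIso e] : E.AdmMono e :=
  hwic e (inv e) (by simp)

lemma admEpi_of_isColimit {X Y W : C} {m : X ⟶ Y} {p : Y ⟶ W} (hmp : E.ses m p)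
    {c : CokernelCofork m} (hc : IsColimit c) : E.AdmEpi c.π := by
  let e := IsColimit.coconePointUniqueUpToIso (E.isCokernel hmp).some hc
  have hpe : p ≫ e.hom = c.π :=
    IsColimit.comp_coconePointUniqueUpToIso_hom (E.isCokernel hmp).some hc WalkingParallelPair.one
  refine E.pullback_admEpi (IsPullback.of_horiz_isIso (fst := 𝟙 Y) (g := e.inv) ⟨?_⟩) ⟨X, m, hmp⟩
  simp [← hpe]

variable [HasBinaryBiproducts C]

lemma admMono_lift_of_admMono_comp (hwic : E.WIC) {X Y Z : C} (f : X ⟶ Y) (g : Y ⟶ Z)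
    (h : E.AdmMono (f ≫ g)) : E.AdmMono (biprod.lift f (f ≫ g)) := by
  have hsplit : E.AdmMono (biprod.lift f (𝟙 X)) := hwic _ biprod.snd (by simp)
  have hfactor : biprod.lift f (𝟙 X) ≫ biprod.map (𝟙 Y) (f ≫ g) = biprod.lift f (f ≫ g) := by
    ext <;> simp
  rw [← hfactor]
  exact E.admMono_comp hsplit (E.pushout_admMono (isPushout_inr_biprodMap Y (f ≫ g)) h)

lemma admMono_comp_inl_of_admMono_comp (hwic : E.WIC) {X Y Z : C} (f : X ⟶ Y) (g : Y ⟶ Z)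
    (h : E.AdmMono (f ≫ g)) : E.AdmMono (f ≫ (biprod.inl : Y ⟶ Y ⊞ Z)) := by
  have hshear : biprod.lift biprod.fst (biprod.snd - biprod.fst ≫ g) ≫
      biprod.lift biprod.fst (biprod.snd + biprod.fst ≫ g) = 𝟙 (Y ⊞ Z) := by
    ext <;> simp
  have hfactor : biprod.lift f (f ≫ g) ≫ biprod.lift biprod.fst (biprod.snd - biprod.fst ≫ g) =
      f ≫ biprod.inl := by
    ext <;> simp
  rw [← hfactor]
  exact E.admMono_comp (E.admMono_lift_of_admMono_comp hwic f g h) (hwic _ _ hshear)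

lemma admMono_of_admMono_comp_inl (hwic : E.WIC) {X Y : C} (Z : C) (f : X ⟶ Y) [HasCokernel f]
    (h : E.AdmMono (f ≫ (biprod.inl : Y ⟶ Y ⊞ Z))) : E.AdmMono f := by
  obtain ⟨W, p, hp⟩ := h
  obtain ⟨K, i, hi⟩ : E.AdmEpi (cokernel.π f) :=
    E.pullback_admEpi (isPullback_inl_biprodMap (cokernel.π f) Z)
      (E.admEpi_of_isColimit hp (isColimitCokernelCoforkBiprodMap (cokernelIsCokernel f) Z))
  obtain ⟨e, he : e ≫ i = f⟩ :=
    KernelFork.IsLimit.lift' (E.isKernel hi).some f (cokernel.condition f)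
  -- `p` kills `i ≫ inl` because `inl ≫ p` factors through `cokernel.π f`.
  obtain ⟨r, hr : r ≫ f ≫ biprod.inl = i ≫ biprod.inl⟩ :=
    KernelFork.IsLimit.lift' (E.isKernel hp).some (i ≫ biprod.inl) <| by
      rw [Category.assoc, ← cokernel.π_desc f (biprod.inl ≫ p) (by simpa using E.comp_zero hp),
        reassoc_of% (E.comp_zero hi), zero_comp]
  have : Mono (f ≫ (biprod.inl : Y ⟶ Y ⊞ Z)) := mono_of_isLimit_fork (E.isKernel hp).some
  have her : e ≫ r = 𝟙 X := by
    rw [← cancel_mono (f ≫ (biprod.inl : Y ⟶ Y ⊞ Z)), Category.assoc, hr, reassoc_of% he,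
      Category.id_comp]
  rw [← he]
  exact E.admMono_comp (hwic e r her) ⟨_, _, hi⟩

theorem admMono_of_admMono_comp (hwic : E.WIC) {X Y Z : C} (f : X ⟶ Y) [HasCokernel f]
    (g : Y ⟶ Z) (h : E.AdmMono (f ≫ g)) : E.AdmMono f :=
  E.admMono_of_admMono_comp_inl hwic Z f (E.admMono_comp_inl_of_admMono_comp hwic f g h)

end ExactStr

lemma DirectedSubset.range_comp_subtype {K I : Type v} [Preorder K] [Preorder I] {J : Set K}
    (hJ : DirectedSubset J) (φ : K ↪o I) :
    DirectedSubset (Set.range ((OrderEmbedding.subtype (· ∈ J)).trans φ)) := by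
  rintro _ ⟨a, rfl⟩ _ ⟨b, rfl⟩
  obtain ⟨c, hc, hac, hbc⟩ := hJ a a.2 b b.2
  exact ⟨_, ⟨⟨c, hc⟩, rfl⟩, φ.monotone hac, φ.monotone hbc⟩

lemma WeaklyCoFlasque.admMono_colimit_pre {C : Type u} [Category.{v} C] [Preadditive C]
    [HasColimitsOfSize.{v, v} C] {E : ExactStr C} (hwic : E.WIC) {I K : Type v} [Preorder I]
    [Preorder K] {F : I ⥤ C} (hF : WeaklyCoFlasque E F) (φ : K ↪o I)
    (hφ : DirectedSubset (Set.range φ)) : E.AdmMono (colimit.pre F φ.monotone.functor) := by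
  have hfactor : φ.monotone.functor =
      φ.orderIso.equivalence.functor ⋙ (Subtype.mono_coe (· ∈ Set.range φ)).functor := rfl
  rw [hfactor, ← colimit.pre_pre]
  exact E.admMono_comp (E.admMono_of_isIso hwic _) (hF.2 _ hφ)

theorem weaklyCoFlasque_restrict_general {C : Type u} [Category.{v} C] [Preadditive C]
    [HasColimitsOfSize.{v, v} C] (E : ExactStr C) (hwic : E.WIC)
    {I : Type v} [Preorder I]
    (F : I ⥤ C) (hF : WeaklyCoFlasque E F)
    (J : Set I) :
    WeaklyCoFlasque E ((Subtype.mono_coe (· ∈ J)).functor ⋙ F) := by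
  have : HasBinaryBiproducts C := HasBinaryBiproducts.of_hasBinaryCoproducts
  refine ⟨fun i j hij => hF.1 i j hij, fun J' hJ' => ?_⟩
  apply E.admMono_of_admMono_comp hwic _ (colimit.pre F (Subtype.mono_coe (· ∈ J)).functor)
  rw [colimit.pre_pre]
  exact hF.admMono_colimit_pre hwic _ (hJ'.range_comp_subtype (OrderEmbedding.subtype (· ∈ J)))

/-- Let `E` be a (weakly idempotent complete) exact category, `I` a filtered
(directed) index, `F : I ⥤ E` a weakly co-flasque system with admissible-monomorphism
transition maps, and `J ⊆ I` a directed subcategory. Then the restriction `F|_J` is weakly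
co-flasque. -/
theorem weaklyCoFlasque_restrict {C : Type u} [Category.{v} C] [Preadditive C]
    [HasColimitsOfSize.{v, v} C] (E : ExactStr C) (hwic : E.WIC)
    {I : Type v} [Preorder I] [IsDirected I (· ≤ ·)] [Nonempty I]
    (F : I ⥤ C) (hF : WeaklyCoFlasque E F)
    (J : Set I) (hJ : DirectedSubset J) :
    WeaklyCoFlasque E ((Subtype.mono_coe (· ∈ J)).functor ⋙ F) :=
  weaklyCoFlasque_restrict_general E hwic F hF J
end

section
/- Let E be an exact category with kernels, and let I : E → A be an exact fully faithful functor into an abelian category that reflects exactness and preserves all kernels that exist in E. Then for every n, the left truncation functor τ^L_{≥n} : Ch(E) → Ch(E) preserves quasi-isomorphisms. -/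
open CategoryTheory Limits

universe v u

open ExactStr

/-!
After applying `I`, the counit `ψ : τ_{≥n} ⟶ 𝟭` becomes a homology isomorphism in each degree
`m ≥ n`. For `m > n` it is an isomorphism in degrees `m + 1` and `m` and a monomorphism in degree
`m - 1`: an isomorphism if `m - 1 > n`, and for `m - 1 = n` the inclusion of the kernel of the
differential, which `I` preserves. In degree `n`, `I (τ_{≥n} W)_n` is the object of cycles of `I W`
and `(τ_{≥n} W)_{n+1} ≅ W_{n+1}`, so both homologies are the same cokernel. Below `n` the
truncations vanish, and the naturality square of `ψ` with two-out-of-three concludes.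
-/

namespace CategoryTheory.ShortComplex

variable {A : Type*} [Category A] [Abelian A]

lemma quasiIso_of_epi_of_isLimit_kernelFork {S₁ S₂ : ShortComplex A} (φ : S₁ ⟶ S₂)
    [Epi φ.τ₁] (hg₁ : S₁.g = 0) (w : φ.τ₂ ≫ S₂.g = 0)
    (hφ : IsLimit (KernelFork.ofι φ.τ₂ w)) : QuasiIso φ := by
  let f' : S₂.X₁ ⟶ S₁.X₂ := hφ.lift (KernelFork.ofι S₂.f S₂.zero)
  have hf' : f' ≫ φ.τ₂ = S₂.f := hφ.fac _ WalkingParallelPair.zero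
  have hf₁ : S₁.f = φ.τ₁ ≫ f' := by
    have : Mono φ.τ₂ := mono_of_isLimit_fork hφ
    rw [← cancel_mono φ.τ₂, Category.assoc, hf', φ.comm₁₂]
  let h₂ : S₂.LeftHomologyData :=
    { K := S₁.X₂, H := cokernel f', i := φ.τ₂, π := cokernel.π f', wi := w, hi := hφ
      wπ := cokernel.condition f', hπ := cokernelIsCokernel f' }
  -- the cokernel of `f'` is also one of `S₁.f = φ.τ₁ ≫ f'` since `φ.τ₁` is epi
  let h₁ : S₁.LeftHomologyData :=
    LeftHomologyData.ofIsColimitCokernelCofork S₁ hg₁ _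
      (isCokernelEpiComp (cokernelIsCokernel f') φ.τ₁ hf₁)
  let γ : LeftHomologyMapData φ h₁ h₂ :=
    { φK := 𝟙 _, φH := 𝟙 _, commf' := (Category.comp_id _).trans hf₁
      commπ := (Category.comp_id _).trans (Category.id_comp _).symm }
  exact γ.quasiIso_iff.2 (inferInstanceAs (IsIso (𝟙 _)))

end CategoryTheory.ShortComplex

namespace HomologicalComplex

variable {A : Type*} [Category A] [Abelian A] {ι : Type*} {c : ComplexShape ι}
  {K L : HomologicalComplex A c} (φ : K ⟶ L) {i j k : ι} (hi : c.prev j = i) (hk : c.next j = k)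
include hi hk

lemma quasiIsoAt_of_epi_of_isIso_of_mono [Epi (φ.f i)] [IsIso (φ.f j)] [Mono (φ.f k)] :
    QuasiIsoAt φ j :=
  (quasiIsoAt_iff' φ i j k hi hk).2 <| by
    have : Epi ((shortComplexFunctor' A c i j k).map φ).τ₁ := ‹Epi (φ.f i)›
    have : IsIso ((shortComplexFunctor' A c i j k).map φ).τ₂ := ‹IsIso (φ.f j)›
    have : Mono ((shortComplexFunctor' A c i j k).map φ).τ₃ := ‹Mono (φ.f k)›
    exact ShortComplex.quasiIso_of_epi_of_isIso_of_mono _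

lemma quasiIsoAt_of_epi_of_isLimit_kernelFork [Epi (φ.f i)] (hK : K.d j k = 0)
    (w : φ.f j ≫ L.d j k = 0) (hφ : IsLimit (KernelFork.ofι (φ.f j) w)) :
    QuasiIsoAt φ j :=
  (quasiIsoAt_iff' φ i j k hi hk).2 <| by
    have : Epi ((shortComplexFunctor' A c i j k).map φ).τ₁ := ‹Epi (φ.f i)›
    exact ShortComplex.quasiIso_of_epi_of_isLimit_kernelFork _ hK w hφ

end HomologicalComplex

section

variable {C A : Type*} [Category C] [HasZeroMorphisms C] [Category A] [Abelian A]

/-- `p` exhibits `K` as the left truncation `τ^L_{≥n} W`. -/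
structure IsLeftTruncation (n : ℤ) {K W : ChainComplex C ℤ} (p : K ⟶ W) : Prop where
  isIso_f : ∀ m, n < m → IsIso (p.f m)
  isZero_X : ∀ m, m < n → IsZero (K.X m)
  isLimit : ∀ w : p.f n ≫ W.d n (n - 1) = 0, Nonempty (IsLimit (KernelFork.ofι (p.f n) w))

namespace IsLeftTruncation

variable {n : ℤ} {K W : ChainComplex C ℤ} {p : K ⟶ W} (hp : IsLeftTruncation n p)
include hp

lemma f_comp_d_eq_zero : p.f n ≫ W.d n (n - 1) = 0 := by
  rw [p.comm, (hp.isZero_X (n - 1) (by omega)).eq_of_tgt (K.d n (n - 1)) 0, zero_comp]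

lemma exactAt_map (I : C ⥤ A) [I.PreservesZeroMorphisms] {m : ℤ} (hm : m < n) :
    ((I.mapHomologicalComplex _).obj K).ExactAt m :=
  .of_isZero (I.map_isZero (hp.isZero_X m hm))

lemma quasiIsoAt_map (I : C ⥤ A) [I.PreservesZeroMorphisms]
    [PreservesLimit (parallelPair (W.d n (n - 1)) 0) I] {m : ℤ} (hm : n ≤ m) :
    QuasiIsoAt ((I.mapHomologicalComplex _).map p) m := by
  have hpI : IsLimit (KernelFork.ofι (I.map (p.f n))
      (by rw [← I.map_comp, hp.f_comp_d_eq_zero, I.map_zero])) :=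
    (KernelFork.ofι (p.f n) hp.f_comp_d_eq_zero).mapIsLimit (hp.isLimit _).some I
  have : Epi (((I.mapHomologicalComplex _).map p).f (m + 1)) := by
    have := hp.isIso_f (m + 1) (by omega)
    exact inferInstanceAs (Epi (I.map _))
  rcases hm.eq_or_lt with rfl | hm
  · exact HomologicalComplex.quasiIsoAt_of_epi_of_isLimit_kernelFork _
      (ChainComplex.prev ℤ n) (ChainComplex.next ℤ n)
      ((I.map_isZero (hp.isZero_X _ (by omega))).eq_of_tgt _ _) _ hpI
  · have : IsIso (((I.mapHomologicalComplex _).map p).f m) := by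
      have := hp.isIso_f m hm
      exact inferInstanceAs (IsIso (I.map _))
    have : Mono (((I.mapHomologicalComplex _).map p).f (m - 1)) := by
      show Mono (I.map _)
      obtain h | h := (show n ≤ m - 1 by omega).eq_or_lt
      · rw [← h]; exact mono_of_isLimit_fork hpI
      · have := hp.isIso_f _ h; infer_instance
    exact HomologicalComplex.quasiIsoAt_of_epi_of_isIso_of_mono _
      (ChainComplex.prev ℤ m) (ChainComplex.next ℤ m)

end IsLeftTruncation

end

theorem truncation_preserves_qiso
    {C : Type u} [Category.{v} C] [Preadditive C]
    {A : Type u} [Category.{v} A] [Abelian A]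
    (I : C ⥤ A) [I.Additive]
    -- `I` preserves all kernels which exist:
    (hker : ∀ ⦃X Y : C⦄ (f : X ⟶ Y), Nonempty (PreservesLimit (parallelPair f 0) I))
    -- the truncation functor:
    (n : ℤ)
    (T : ChainComplex C ℤ ⥤ ChainComplex C ℤ) (ψ : T ⟶ 𝟭 (ChainComplex C ℤ))
    (hiso : ∀ (X : ChainComplex C ℤ) (m : ℤ), n < m → IsIso ((ψ.app X).f m))
    (hzero : ∀ (X : ChainComplex C ℤ) (m : ℤ), m < n → IsZero ((T.obj X).X m))
    (hkerτ : ∀ (X : ChainComplex C ℤ) (w : (ψ.app X).f n ≫ X.d n (n - 1) = 0),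
      Nonempty (IsLimit (KernelFork.ofι ((ψ.app X).f n) w)))
    -- a quasi-isomorphism (image under `I` is a quasi-isomorphism):
    {X Y : ChainComplex C ℤ} (f : X ⟶ Y)
    (hf : QuasiIso ((I.mapHomologicalComplex (ComplexShape.down ℤ)).map f)) :
    QuasiIso ((I.mapHomologicalComplex (ComplexShape.down ℤ)).map (T.map f)) := by
  set F := I.mapHomologicalComplex (ComplexShape.down ℤ)
  have hψ (W : ChainComplex C ℤ) : IsLeftTruncation n (W := W) (ψ.app W) :=
    ⟨hiso W, hzero W, hkerτ W⟩
  rw [quasiIso_iff]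
  intro m
  rcases le_or_gt n m with hm | hm
  · have := (hker (X.d n (n - 1))).some
    have := (hker (Y.d n (n - 1))).some
    have := (hψ X).quasiIsoAt_map I hm
    have := (hψ Y).quasiIsoAt_map I hm
    have : QuasiIsoAt (F.map (T.map f) ≫ F.map (ψ.app Y)) m := by
      rw [← F.map_comp, ψ.naturality, Functor.id_map, F.map_comp]
      infer_instance
    exact quasiIsoAt_of_comp_right _ (F.map (ψ.app Y)) m
  · exact (quasiIsoAt_iff_exactAt _ m ((hψ X).exactAt_map I hm)).2 ((hψ Y).exactAt_map I hm)
end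

section
/- Let E be a small weakly idempotent complete exact category in which ω^op-limits of inverse systems with admissible-epimorphism transition maps exist and are exact. Then the abelian category of sheaves on E (with the admissible-epimorphism topology) also has the property that ω^op-limits of inverse systems with epimorphism transition maps are exact; that is, the levelwise limit of a short exact sequence of such inverse systems of sheaves is a short exact sequence. -/
/-!
Left exactness of the limit is formal: `lim` is a right adjoint, so it preserves kernels and
monomorphisms. The content is that `lim G ⟶ lim H` is an epimorphism of sheaves, i.e. locally
surjective for the topology of admissible epimorphisms. Given a section `t` of `lim H` over `D`,
its components `tₙ` are lifted one level at a time: a lift of `tₙ` over `Cₙ` is lifted along the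
epimorphism `Gₙ₊₁ ⟶ Hₙ₊₁` after an admissible cover, and the defect to the previous lift, a section
of `Kₙ`, is removed by a local lift to `Kₙ₊₁`. The successive covers form a tower of admissible
epimorphisms, whose limit still covers `D` admissibly: the limit of the short exact tower
`ker ⟶ Cₙ ⟶ C₀` is short exact in `E`. Over this limit the lifts assemble into a section of `lim G`.
-/

open CategoryTheory Limits

universe v u

open Opposite

namespace ExactStr

variable {C : Type u} [Category.{v} C] [Preadditive C] (Ex : ExactStr C)

theorem admEpi_of_isIso (hwic : Ex.WIC) {X Y : C} (f : X ⟶ Y) [IsIso f] : Ex.AdmEpi f := by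
  -- The cokernel `W` of `𝟙 X` is zero, so an admissible epimorphism `W ⟶ W'` exists and is an
  -- isomorphism of zero objects; any isomorphism is a pullback of it.
  obtain ⟨W, p, hp⟩ := hwic (𝟙 X) (𝟙 X) (Category.id_comp _)
  have hW : IsZero W := CokernelCofork.IsColimit.isZero_of_epi (Ex.isCokernel hp).some
  obtain ⟨W', p', hp'⟩ := hwic (𝟙 W) (𝟙 W) (Category.id_comp _)
  have hW' : IsZero W' := CokernelCofork.IsColimit.isZero_of_epi (Ex.isCokernel hp').some
  have : IsIso p' := hW.isIso hW' p'
  exact Ex.pullback_admEpi (IsPullback.of_vert_isIso (fst := 0) (g := 0) ⟨hW'.eq_of_tgt _ _⟩)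
    ⟨W, 𝟙 W, hp'⟩

theorem isPullback_of_ses {K K' Y Y' Z : C} {i : K ⟶ Y} {p : Y ⟶ Z} {i' : K' ⟶ Y'}
    {g : Y' ⟶ Y} {w : K' ⟶ K} (h : Ex.ses i p) (h' : Ex.ses i' (g ≫ p))
    (hw : w ≫ i = i' ≫ g) : IsPullback i' w g i := by
  have : Mono i := mono_of_isLimit_fork (Ex.isKernel h).some
  have : Mono i' := mono_of_isLimit_fork (Ex.isKernel h').some
  have hk : ∀ s : PullbackCone g i, s.fst ≫ g ≫ p = 0 := fun s => by
    rw [← Category.assoc, s.condition, Category.assoc, Ex.comp_zero h, Limits.comp_zero]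
  let lift s := KernelFork.IsLimit.lift' (Ex.isKernel h').some s.fst (hk s)
  have hlift : ∀ s, (lift s).1 ≫ i' = s.fst := fun s => (lift s).2
  refine ⟨⟨hw.symm⟩, ⟨PullbackCone.IsLimit.mk _ (fun s => (lift s).1) hlift
    (fun s => ?_) (fun s m hm _ => ?_)⟩⟩
  · rw [← cancel_mono i, Category.assoc, hw, ← Category.assoc, hlift, s.condition]
  · rw [← cancel_mono i', hm, hlift]

end ExactStr

theorem exists_seq_of_forall_exists {P : ℕ → Sort*} (R : ∀ n, P n → P (n + 1) → Prop)
    (x₀ : P 0) (h : ∀ n x, ∃ y, R n x y) :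
    ∃ x : ∀ n, P n, x 0 = x₀ ∧ ∀ n, R n (x n) (x (n + 1)) := by
  choose next hnext using h
  exact ⟨fun n => Nat.rec x₀ next n, rfl, fun n => hnext n _⟩

namespace CategoryTheory.ShortComplex.ShortExact

variable {J C : Type*} [Category J] [Category C] [Abelian C] {S : ShortComplex (J ⥤ C)}

theorem of_evaluation (h : ∀ j, (S.map ((evaluation J C).obj j)).ShortExact) : S.ShortExact :=
  (JointlyReflectIsomorphisms.shortExact_iff
    ⟨fun f h => @NatIso.isIso_of_isIso_app _ _ _ _ _ _ f h⟩ S).2 h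

theorem exact_map_lim [HasLimitsOfShape J C] (hS : S.ShortExact) : (S.map lim).Exact :=
  hS.exact.map_of_mono_of_preservesKernel lim hS.mono_f inferInstance

end CategoryTheory.ShortComplex.ShortExact

section SheafSections

variable {C : Type u} [SmallCategory C] {J : GrothendieckTopology C}

theorem hom_app_apply_of_comp_eq {F₁ F₂ G₁ G₂ : Sheaf J AddCommGrpCat.{u}} {a : F₁ ⟶ F₂}
    {b : F₂ ⟶ G₂} {c : F₁ ⟶ G₁} {d : G₁ ⟶ G₂} (h : a ≫ b = c ≫ d) (X : Cᵒᵖ) (x : F₁.obj.obj X) :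
    b.hom.app X (a.hom.app X x) = d.hom.app X (c.hom.app X x) :=
  congr_arg (fun f => f.hom.app X x) h

theorem exists_preimage_of_shortExact {S : ShortComplex (Sheaf J AddCommGrpCat.{u})}
    (hS : S.ShortExact) {X : Cᵒᵖ} (d : S.X₂.obj.obj X) (hd : S.g.hom.app X d = 0) :
    ∃ k, S.f.hom.app X k = d :=
  (ShortComplex.ab_exact_iff _).1
    (hS.exact.map_of_mono_of_preservesKernel (sheafToPresheaf J _ ⋙ (evaluation _ _).obj X)
      hS.mono_f inferInstance)
    d hd

abbrev sectionsFunctor (X : Cᵒᵖ) : Sheaf J AddCommGrpCat.{u} ⥤ Type u :=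
  sheafToPresheaf J _ ⋙ (evaluation _ _).obj X ⋙ forget _

theorem limit_section_ext {I : Type} [SmallCategory I] {F : I ⥤ Sheaf J AddCommGrpCat.{u}}
    {X : Cᵒᵖ} {s s' : (limit F).obj.obj X}
    (h : ∀ i, (limit.π F i).hom.app X s = (limit.π F i).hom.app X s') : s = s' :=
  (Types.isLimitEquivSections (isLimitOfPreserves (sectionsFunctor X) (limit.isLimit F))).injective
    (Subtype.ext (funext h))

theorem limit_π_hom_app_map {I : Type} [SmallCategory I] (F : I ⥤ Sheaf J AddCommGrpCat.{u})
    {i j : I} (f : i ⟶ j) (X : Cᵒᵖ) (s : (limit F).obj.obj X) :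
    (F.map f).hom.app X ((limit.π F i).hom.app X s) = (limit.π F j).hom.app X s :=
  congr_arg (fun g => g.hom.app X s) (limit.w F f)

theorem exists_limit_section {F : ℕᵒᵖ ⥤ Sheaf J AddCommGrpCat.{u}} {X : Cᵒᵖ}
    (a : ∀ n : ℕ, (F.obj (op n)).obj.obj X)
    (ha : ∀ n, (F.map (homOfLE n.le_succ).op).hom.app X (a (n + 1)) = a n) :
    ∃ s : (limit F).obj.obj X, ∀ n, (limit.π F (op n)).hom.app X s = a n := by
  let c : Cone (F ⋙ sectionsFunctor X) :=
    ⟨PUnit, NatTrans.ofOpSequence (fun n => ↾fun _ => a n) (fun n => by ext; exact (ha n).symm)⟩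
  let hF := isLimitOfPreserves (sectionsFunctor X) (limit.isLimit F)
  exact ⟨hF.lift c PUnit.unit, fun n => ConcreteCategory.congr_hom (hF.fac c (op n)) PUnit.unit⟩

structure ComponentLift (T : ShortComplex (ℕᵒᵖ ⥤ Sheaf J AddCommGrpCat.{u})) {D : C}
    (t : (limit T.X₃).obj.obj (op D)) (n : ℕ) where
  obj : C
  hom : obj ⟶ D
  sec : (T.X₂.obj (op n)).obj.obj (op obj)
  lift : (T.g.app (op n)).hom.app _ sec =
    (T.X₃.obj (op n)).obj.map hom.op ((limit.π T.X₃ (op n)).hom.app _ t)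

end SheafSections

variable {E : Type u} [SmallCategory E] [Preadditive E]

/-- An inverse system over `ω` whose (successor) transition maps are admissible epimorphisms. -/
def AdmEpiSys (Ex : ExactStr E) (F : ℕᵒᵖ ⥤ E) : Prop :=
  ∀ n : ℕ, Ex.AdmEpi (F.map (homOfLE (Nat.le_succ n)).op)

theorem AdmEpiSys.admEpi_map {Ex : ExactStr E} (hwic : Ex.WIC) {F : ℕᵒᵖ ⥤ E}
    (hF : AdmEpiSys Ex F) {m n : ℕᵒᵖ} (f : m ⟶ n) : Ex.AdmEpi (F.map f) := by
  obtain ⟨m⟩ := m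
  obtain ⟨n⟩ := n
  change Ex.AdmEpi (F.map (homOfLE (leOfHom f.unop)).op)
  generalize leOfHom f.unop = h
  clear f
  induction m, h using Nat.le_induction with
  | base =>
    rw [show homOfLE (le_refl n) = 𝟙 n from rfl, op_id, F.map_id]
    exact Ex.admEpi_of_isIso hwic _
  | succ m hnm ih =>
    rw [← homOfLE_comp hnm (Nat.le_succ m), op_comp, F.map_comp]
    exact Ex.admEpi_comp (hF m) ih

theorem exists_kernel_tower {Ex : ExactStr E} {F : ℕᵒᵖ ⥤ E} (hF : AdmEpiSys Ex F) {X : E}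
    (β : F ⟶ (Functor.const ℕᵒᵖ).obj X) (hβ : ∀ n, Ex.AdmEpi (β.app n)) :
    ∃ (K : ℕᵒᵖ ⥤ E) (α : K ⟶ F), AdmEpiSys Ex K ∧ ∀ n, Ex.ses (α.app n) (β.app n) := by
  choose W i hi using fun n : ℕ => hβ (op n)
  have hβsucc : ∀ n : ℕ,
      β.app (op (n + 1)) = F.map (homOfLE n.le_succ).op ≫ β.app (op n) := fun n =>
    ((β.naturality (homOfLE n.le_succ).op).trans (Category.comp_id _)).symm
  have hw : ∀ n, (i (n + 1) ≫ F.map (homOfLE n.le_succ).op) ≫ β.app (op n) = 0 := fun n => by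
    rw [Category.assoc, ← hβsucc, Ex.comp_zero (hi _)]
  let w n := KernelFork.IsLimit.lift' (Ex.isKernel (hi n)).some _ (hw n)
  have hwi : ∀ n, (w n).1 ≫ i n = i (n + 1) ≫ F.map (homOfLE n.le_succ).op := fun n => (w n).2
  refine ⟨Functor.ofOpSequence (fun n => (w n).1),
    NatTrans.ofOpSequence i (fun n => by rw [Functor.ofOpSequence_map_homOfLE_succ]; exact hwi n),
    fun n => ?_, fun n => hi n.unop⟩
  rw [Functor.ofOpSequence_map_homOfLE_succ]
  exact Ex.pullback_admEpi (Ex.isPullback_of_ses (hi n) (hβsucc n ▸ hi (n + 1)) (hwi n)) (hF n)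

theorem admEpi_limit_π_zero {Ex : ExactStr E} (hwic : Ex.WIC)
    (hex : ∀ F : ℕᵒᵖ ⥤ E, AdmEpiSys Ex F → HasLimit F)
    (hcoelem : ∀ (F G H : ℕᵒᵖ ⥤ E) (α : F ⟶ G) (β : G ⟶ H)
      (hF : AdmEpiSys Ex F) (hG : AdmEpiSys Ex G) (hH : AdmEpiSys Ex H),
      (∀ n : ℕᵒᵖ, Ex.ses (α.app n) (β.app n)) →
      haveI := hex F hF; haveI := hex G hG; haveI := hex H hH
      Ex.ses (limMap α) (limMap β))
    {F : ℕᵒᵖ ⥤ E} (hF : AdmEpiSys Ex F) [HasLimit F] : Ex.AdmEpi (limit.π F (op 0)) := by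
  -- `lim` of the short exact tower `K ⟶ F ⟶ const F₀` is short exact, and `lim (const F₀) ≅ F₀`.
  let β : F ⟶ (Functor.const ℕᵒᵖ).obj (F.obj (op 0)) :=
    (coconeOfDiagramTerminal (isInitialBot : IsInitial (0 : ℕ)).op F).ι
  obtain ⟨K, α, hK, hses⟩ := exists_kernel_tower hF β (fun n => hF.admEpi_map hwic _)
  have hX : AdmEpiSys Ex ((Functor.const ℕᵒᵖ).obj (F.obj (op 0))) :=
    fun n => by simpa using Ex.admEpi_of_isIso hwic (𝟙 (F.obj (op 0)))
  have := hex _ hX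
  have hπ : limit.π F (op 0) = limMap β ≫ limit.π _ (op 0) := by
    rw [limMap_π]
    simp [β]
  have : IsIso (limit.π ((Functor.const ℕᵒᵖ).obj (F.obj (op 0))) (op 0)) := by
    have h : (limit.isoLimitCone ⟨_, isLimitConstCone ℕᵒᵖ (F.obj (op 0))⟩).hom =
        limit.π _ (op 0) :=
      (Category.comp_id _).symm.trans (limit.isoLimitCone_hom_π _ (op 0))
    rw [← h]
    exact Iso.isIso_hom _
  rw [hπ]
  exact Ex.admEpi_comp ⟨_, _, hcoelem K F _ α β hK hF hX hses⟩ (Ex.admEpi_of_isIso hwic _)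

section Sheaves

variable {J : GrothendieckTopology E} {Ex : ExactStr E}

theorem epi_iff_exists_admEpi_lift
    (hJ : ∀ (D : E) (S : Sieve D), S ∈ J D ↔ ∃ (C : E) (p : C ⟶ D), Ex.AdmEpi p ∧ S p)
    {F G : Sheaf J AddCommGrpCat.{u}} (φ : F ⟶ G) :
    Epi φ ↔ ∀ (D : E) (s : G.obj.obj (op D)), ∃ (C : E) (p : C ⟶ D), Ex.AdmEpi p ∧
      ∃ t : F.obj.obj (op C), φ.hom.app (op C) t = G.obj.map p.op s := by
  rw [← Sheaf.isLocallySurjective_iff_epi']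
  refine ⟨fun h D s => ?_, fun h => ⟨fun {D} s => ?_⟩⟩
  · obtain ⟨C, p, hp, t, ht⟩ := (hJ D _).1 (h.imageSieve_mem s)
    exact ⟨C, p, hp, t, ht⟩
  · obtain ⟨C, p, hp, t, ht⟩ := h D s
    exact (hJ D _).2 ⟨C, p, hp, t, ht⟩

theorem exists_admEpi_lift_step
    (hJ : ∀ (D : E) (S : Sieve D), S ∈ J D ↔ ∃ (C : E) (p : C ⟶ D), Ex.AdmEpi p ∧ S p)
    {S S' : ShortComplex (Sheaf J AddCommGrpCat.{u})} (φ : S' ⟶ S) (hS : S.ShortExact)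
    [Epi S'.g] [Epi φ.τ₁] {C : E} (g : S.X₂.obj.obj (op C)) (t : S'.X₃.obj.obj (op C))
    (hgt : S.g.hom.app _ g = φ.τ₃.hom.app _ t) :
    ∃ (C' : E) (q : C' ⟶ C), Ex.AdmEpi q ∧ ∃ g' : S'.X₂.obj.obj (op C'),
      S'.g.hom.app _ g' = S'.X₃.obj.map q.op t ∧ φ.τ₂.hom.app _ g' = S.X₂.obj.map q.op g := by
  obtain ⟨C₁, q₁, hq₁, g₁, hg₁⟩ := (epi_iff_exists_admEpi_lift hJ S'.g).1 inferInstance C t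
  have hd : S.g.hom.app _ (φ.τ₂.hom.app _ g₁ - S.X₂.obj.map q₁.op g) = 0 := by
    rw [map_sub, hom_app_apply_of_comp_eq φ.comm₂₃, hg₁, NatTrans.naturality_apply,
      NatTrans.naturality_apply, hgt, sub_self]
  obtain ⟨k, hk⟩ := exists_preimage_of_shortExact hS _ hd
  obtain ⟨C₂, q₂, hq₂, k', hk'⟩ := (epi_iff_exists_admEpi_lift hJ φ.τ₁).1 inferInstance C₁ k
  refine ⟨C₂, q₂ ≫ q₁, Ex.admEpi_comp hq₂ hq₁,
    S'.X₂.obj.map q₂.op g₁ - S'.f.hom.app _ k', ?_, ?_⟩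
  · have hfg : S'.g.hom.app _ (S'.f.hom.app (op C₂) k') = 0 := by
      change (S'.f ≫ S'.g).hom.app _ k' = 0
      rw [S'.zero]
      rfl
    rw [map_sub, NatTrans.naturality_apply, hg₁, hfg, sub_zero, op_comp, Functor.map_comp,
      ConcreteCategory.comp_apply]
  · rw [map_sub, ← hom_app_apply_of_comp_eq φ.comm₁₂, hk', NatTrans.naturality_apply,
      NatTrans.naturality_apply, hk, ← map_sub, sub_sub_cancel, op_comp, Functor.map_comp,
      ConcreteCategory.comp_apply]

namespace ComponentLift

variable {T : ShortComplex (ℕᵒᵖ ⥤ Sheaf J AddCommGrpCat.{u})} {D : E}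
  {t : (limit T.X₃).obj.obj (op D)}

theorem exists_succ
    (hJ : ∀ (D : E) (S : Sieve D), S ∈ J D ↔ ∃ (C : E) (p : C ⟶ D), Ex.AdmEpi p ∧ S p)
    (hT : ∀ n, (T.map ((evaluation _ _).obj n)).ShortExact)
    (hK : ∀ n : ℕ, Epi (T.X₁.map (homOfLE n.le_succ).op)) {n : ℕ} (x : ComponentLift T t n) :
    ∃ (y : ComponentLift T t (n + 1)) (q : y.obj ⟶ x.obj), Ex.AdmEpi q ∧ y.hom = q ≫ x.hom ∧
      (T.X₂.map (homOfLE n.le_succ).op).hom.app _ y.sec = (T.X₂.obj (op n)).obj.map q.op x.sec := by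
  have := (hT (op (n + 1))).epi_g
  let φ : T.map ((evaluation _ _).obj (op (n + 1))) ⟶ T.map ((evaluation _ _).obj (op n)) :=
    T.mapNatTrans ((evaluation _ _).map (homOfLE n.le_succ).op)
  have : Epi φ.τ₁ := hK n
  obtain ⟨C', q, hq, g', hg', hφ⟩ := exists_admEpi_lift_step hJ φ (hT (op n)) x.sec
    ((T.X₃.obj (op (n + 1))).obj.map x.hom.op ((limit.π T.X₃ (op (n + 1))).hom.app _ t)) (by
      change (T.g.app (op n)).hom.app _ x.sec = (T.X₃.map (homOfLE n.le_succ).op).hom.app _ _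
      rw [x.lift, NatTrans.naturality_apply, limit_π_hom_app_map])
  refine ⟨⟨C', q ≫ x.hom, g', ?_⟩, q, hq, rfl, hφ⟩
  rw [op_comp, Functor.map_comp, ConcreteCategory.comp_apply]
  exact hg'

end ComponentLift

theorem epi_limMap_g
    (hJ : ∀ (D : E) (S : Sieve D), S ∈ J D ↔ ∃ (C : E) (p : C ⟶ D), Ex.AdmEpi p ∧ S p)
    (hcone : ∀ F : ℕᵒᵖ ⥤ E, AdmEpiSys Ex F → ∃ c : Cone F, Ex.AdmEpi (c.π.app (op 0)))
    {T : ShortComplex (ℕᵒᵖ ⥤ Sheaf J AddCommGrpCat.{u})}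
    (hT : ∀ n, (T.map ((evaluation _ _).obj n)).ShortExact)
    (hK : ∀ n : ℕ, Epi (T.X₁.map (homOfLE n.le_succ).op)) : Epi (limMap T.g) := by
  rw [epi_iff_exists_admEpi_lift hJ]
  intro D t
  have := (hT (op 0)).epi_g
  obtain ⟨C₀, f₀, hf₀, g₀, hg₀⟩ := (epi_iff_exists_admEpi_lift hJ (T.g.app (op 0))).1 this D
    ((limit.π T.X₃ (op 0)).hom.app _ t)
  obtain ⟨x, hx₀, hx⟩ := exists_seq_of_forall_exists _ (⟨C₀, f₀, g₀, hg₀⟩ : ComponentLift T t 0)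
    (fun n x => x.exists_succ hJ hT hK)
  choose q hq hhom hsec using hx
  obtain ⟨c, hc⟩ := hcone (Functor.ofOpSequence (X := fun n => (x n).obj) q)
    (fun n => by rw [Functor.ofOpSequence_map_homOfLE_succ]; exact hq n)
  let π n : c.pt ⟶ (x n).obj := c.π.app (op n)
  have hπq : ∀ n, π (n + 1) ≫ q n = π n := fun n => by
    rw [← Functor.ofOpSequence_map_homOfLE_succ (X := fun n => (x n).obj) q n]
    exact c.w _
  have hπhom : ∀ n, π n ≫ (x n).hom = π 0 ≫ (x 0).hom := by
    intro n
    induction n with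
    | zero => rfl
    | succ n ih => rw [hhom, ← Category.assoc, hπq, ih]
  obtain ⟨s, hs⟩ := exists_limit_section (F := T.X₂) (X := op c.pt)
    (fun n => (T.X₂.obj (op n)).obj.map (π n).op (x n).sec) (fun n => by
      rw [NatTrans.naturality_apply, hsec, ← ConcreteCategory.comp_apply, ← Functor.map_comp,
        ← op_comp, hπq])
  have hx0 : Ex.AdmEpi (x 0).hom := by rw [hx₀]; exact hf₀
  refine ⟨c.pt, π 0 ≫ (x 0).hom, Ex.admEpi_comp hc hx0, s, limit_section_ext fun ⟨n⟩ => ?_⟩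
  rw [hom_app_apply_of_comp_eq (limMap_π T.g (op n)), hs, NatTrans.naturality_apply, (x n).lift,
    ← ConcreteCategory.comp_apply, ← Functor.map_comp, ← op_comp, hπhom, NatTrans.naturality_apply]

end Sheaves

/-- Let `E` be a small weakly idempotent complete exact category in which
`ωᵒᵖ`-limits of inverse systems with admissible-epimorphism transition maps exist and are
exact. Then the abelian category of sheaves on `E` (with the admissible-epimorphism topology)
has exact `ωᵒᵖ`-limits of inverse systems with epimorphism transition maps: the levelwise
limit of a levelwise short exact sequence of such systems of sheaves is short exact. -/
theorem sheaf_coelementary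
    (Ex : ExactStr E) (hwic : Ex.WIC)
    -- limits of admissible-epimorphism towers exist in `E` ...
    (hex : ∀ F : ℕᵒᵖ ⥤ E, AdmEpiSys Ex F → HasLimit F)
    -- ... and are exact:
    (hcoelem : ∀ (F G H : ℕᵒᵖ ⥤ E) (α : F ⟶ G) (β : G ⟶ H)
      (hF : AdmEpiSys Ex F) (hG : AdmEpiSys Ex G) (hH : AdmEpiSys Ex H),
      (∀ n : ℕᵒᵖ, Ex.ses (α.app n) (β.app n)) →
      haveI := hex F hF; haveI := hex G hG; haveI := hex H hH
      Ex.ses (limMap α) (limMap β))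
    -- the topology generated by single admissible epimorphisms:
    (J : GrothendieckTopology E)
    (hJ : ∀ (D : E) (S : Sieve D), S ∈ J D ↔ ∃ (C : E) (p : C ⟶ D), Ex.AdmEpi p ∧ S p)
    -- a levelwise short exact sequence of inverse systems of sheaves with epimorphic
    -- transition maps:
    (K G H : ℕᵒᵖ ⥤ Sheaf J AddCommGrpCat.{u}) (α : K ⟶ G) (β : G ⟶ H)
    (hK : ∀ n : ℕ, Epi (K.map (homOfLE (Nat.le_succ n)).op))
    (hG : ∀ n : ℕ, Epi (G.map (homOfLE (Nat.le_succ n)).op))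
    (hH : ∀ n : ℕ, Epi (H.map (homOfLE (Nat.le_succ n)).op))
    (hw : α ≫ β = 0)
    (hse : ∀ n : ℕᵒᵖ, (ShortComplex.mk (α.app n) (β.app n)
      (by rw [← NatTrans.comp_app, hw]; rfl)).ShortExact) :
    (ShortComplex.mk (limMap α) (limMap β)
      (by apply limit.hom_ext; intro n; simp [← NatTrans.comp_app, hw])).ShortExact := by
  have hS : (ShortComplex.mk α β hw).ShortExact := .of_evaluation hse
  have := hS.mono_f
  refine { exact := hS.exact_map_lim, mono_f := lim.map_mono α, epi_g := ?_ }
  refine epi_limMap_g (T := ShortComplex.mk α β hw) hJ (fun F hF => ?_) hse hK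
  have := hex F hF
  exact ⟨limit.cone F, admEpi_limit_π_zero hwic hex hcoelem hF⟩
end

section
/- Let R be a semi-normed ring. Then the category sNorm_R of semi-normed R-modules with bounded R-linear maps has enough projectives, given functorially by P(M) = (⊕^{≤1}_{m : ρ(m)≠0} R_{ρ(m)}) ⊕ (⊕^{≤1}_{m : ρ(m)=0} R^{→0}), with the evident evaluation map P(M) → M being an admissible epimorphism. -/
open CategoryTheory

/-- A semi-normed module over a semi-normed (commutative) ring `R`: a module with a
semi-norm `‖·‖` satisfying `‖r • m‖ ≤ C * ‖r‖ * ‖m‖` for some constant `C`. -/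
structure SNormMod (R : Type) [SeminormedCommRing R] : Type 1 where
  carrier : Type
  [snorm : SeminormedAddCommGroup carrier]
  [mod : Module R carrier]
  bound : ∃ C : ℝ, ∀ (r : R) (m : carrier), ‖r • m‖ ≤ C * ‖r‖ * ‖m‖

attribute [instance] SNormMod.snorm SNormMod.mod

variable {R : Type} [SeminormedCommRing R]

/-- Bounded `R`-linear maps between semi-normed `R`-modules. -/
@[ext]
structure BddHom (M N : SNormMod R) where
  toLinear : M.carrier →ₗ[R] N.carrier
  bdd : ∃ C : ℝ, ∀ m : M.carrier, ‖toLinear m‖ ≤ C * ‖m‖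

/-- The category `sNorm_R` of semi-normed `R`-modules and bounded `R`-linear maps. -/
instance : Category (SNormMod R) where
  Hom := BddHom
  id M := ⟨LinearMap.id, ⟨1, fun m => by simp⟩⟩
  comp {M N P} f g := ⟨g.toLinear.comp f.toLinear, by
    obtain ⟨Cf, hf⟩ := f.bdd
    obtain ⟨Cg, hg⟩ := g.bdd
    refine ⟨max Cg 0 * Cf, fun m => ?_⟩
    calc ‖g.toLinear (f.toLinear m)‖ ≤ Cg * ‖f.toLinear m‖ := hg _
      _ ≤ max Cg 0 * ‖f.toLinear m‖ :=
        mul_le_mul_of_nonneg_right (le_max_left _ _) (norm_nonneg _)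
      _ ≤ max Cg 0 * (Cf * ‖m‖) := mul_le_mul_of_nonneg_left (hf m) (le_max_right _ _)
      _ = max Cg 0 * Cf * ‖m‖ := (mul_assoc _ _ _).symm⟩
  id_comp f := BddHom.ext (f.toLinear.comp_id)
  comp_id f := BddHom.ext (f.toLinear.id_comp)
  assoc f g h := BddHom.ext rfl

/-- Admissible epimorphisms in `sNorm_R`: bounded surjections admitting a bound on the
norms of preimages (up to `ε`). -/
def AdmEpiSN {M N : SNormMod R} (f : M ⟶ N) : Prop :=
  ∃ C : ℝ, ∀ (n : N.carrier) (ε : ℝ), 0 < ε →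
    ∃ m : M.carrier, f.toLinear m = n ∧ ‖m‖ ≤ C * ‖n‖ + ε

/-- Projective objects of `sNorm_R`: objects whose maps lift along admissible epimorphisms. -/
def ProjSN (P : SNormMod R) : Prop :=
  ∀ ⦃M N : SNormMod R⦄ (g : M ⟶ N), AdmEpiSN g → ∀ h : P ⟶ N, ∃ k : P ⟶ M, k ≫ g = h

/-!
A weighted `ℓ¹`-sum `⊕^{≤1}_i R_{w i}` with all weights positive is projective: a bounded map out
of it is determined by the images of the basis vectors, and lifting the image of the `i`-th one
along an admissible epimorphism with error at most `w i` keeps the lifts bounded by a fixed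
multiple of the weight. For `M` take the basis `M × ℕ` with weight `‖m‖ + 2⁻ᵏ`, mapping `(m, k)`
to `m`: this is functorial in `M`, and `(m, k)` is a preimage of `m` of norm
`‖1‖ * ‖m‖ + ‖1‖ * 2⁻ᵏ`, so the evaluation map is an admissible epimorphism.
-/

open NNReal Filter Topology

namespace Finsupp

variable {ι E : Type*} [SeminormedAddCommGroup E] (w : ι → ℝ≥0)

noncomputable def weightedL1Seminorm : AddGroupSeminorm (ι →₀ E) where
  toFun f := f.sum fun i e => ‖e‖ * w i
  map_zero' := sum_zero_index
  add_le' f g := by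
    classical
    have hzero : ∀ i ∈ f.support ∪ g.support, ‖(0 : E)‖ * w i = 0 := by simp
    rw [sum_of_support_subset _ support_add _ hzero,
      sum_of_support_subset f Finset.subset_union_left _ hzero,
      sum_of_support_subset g Finset.subset_union_right _ hzero, ← Finset.sum_add_distrib]
    gcongr with i
    rw [← add_mul, add_apply]
    gcongr
    exact norm_add_le _ _
  neg' f := by simp [sum_neg_index]

theorem weightedL1Seminorm_eq_sum (f : ι →₀ E) {s : Finset ι} (hs : f.support ⊆ s) :
    weightedL1Seminorm w f = ∑ i ∈ s, ‖f i‖ * w i :=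
  sum_of_support_subset f hs (fun i e => ‖e‖ * (w i : ℝ)) fun i _ => by simp

theorem weightedL1Seminorm_single (i : ι) (e : E) :
    weightedL1Seminorm w (single i e) = ‖e‖ * w i := by
  classical
  rw [weightedL1Seminorm_eq_sum w _ support_single_subset, Finset.sum_singleton, single_eq_same]

variable {S : Type*} [SeminormedRing S]

theorem weightedL1Seminorm_smul_le [Module S E] [IsBoundedSMul S E] (r : S) (f : ι →₀ E) :
    weightedL1Seminorm w (r • f) ≤ ‖r‖ * weightedL1Seminorm w f := by
  rw [weightedL1Seminorm_eq_sum w _ support_smul, weightedL1Seminorm_eq_sum w f subset_rfl,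
    Finset.mul_sum]
  refine Finset.sum_le_sum fun i _ => ?_
  rw [← mul_assoc, smul_apply]
  exact mul_le_mul_of_nonneg_right (norm_smul_le _ _) (w i).2

theorem norm_linearCombination_le [Module S E] {C : ℝ} (hC₀ : 0 ≤ C)
    (hC : ∀ (r : S) (e : E), ‖r • e‖ ≤ C * ‖r‖ * ‖e‖) {a : ι → E} {K : ℝ}
    (ha : ∀ i, ‖a i‖ ≤ K * w i) (f : ι →₀ S) :
    ‖linearCombination S a f‖ ≤ C * K * weightedL1Seminorm w f := by
  rw [linearCombination_apply, weightedL1Seminorm_eq_sum w f subset_rfl, Finset.mul_sum]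
  refine (norm_sum_le _ _).trans (Finset.sum_le_sum fun i _ => ?_)
  calc ‖f i • a i‖ ≤ C * ‖f i‖ * ‖a i‖ := hC _ _
    _ ≤ C * ‖f i‖ * (K * w i) := by gcongr; exact ha i
    _ = C * K * (‖f i‖ * w i) := by ring

end Finsupp

open Finsupp

theorem SNormMod.exists_nonneg_smul_bound (M : SNormMod R) :
    ∃ C : ℝ, 0 ≤ C ∧ ∀ (r : R) (m : M.carrier), ‖r • m‖ ≤ C * ‖r‖ * ‖m‖ := by
  obtain ⟨C, hC⟩ := M.bound
  refine ⟨max C 0, le_max_right _ _, fun r m => (hC r m).trans ?_⟩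
  gcongr
  exact le_max_left _ _

theorem BddHom.exists_nonneg_bound {M N : SNormMod R} (f : M ⟶ N) :
    ∃ C : ℝ, 0 ≤ C ∧ ∀ m : M.carrier, ‖f.toLinear m‖ ≤ C * ‖m‖ := by
  obtain ⟨C, hC⟩ := f.bdd
  refine ⟨max C 0, le_max_right _ _, fun m => (hC m).trans ?_⟩
  gcongr
  exact le_max_left _ _

namespace SNormMod

variable {ι : Type} (w : ι → ℝ≥0)

variable (R) in
/-- The `ℓ¹`-sum `⊕^{≤1}_i R_{w i}`. -/
noncomputable def weightedL1 : SNormMod R where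
  carrier := ι →₀ R
  snorm := (weightedL1Seminorm w).toSeminormedAddCommGroup
  bound := ⟨1, fun r f => by
    rw [one_mul]
    exact weightedL1Seminorm_smul_le w r f⟩

namespace weightedL1

variable (R) in
noncomputable def of (i : ι) : (weightedL1 R w).carrier := single i 1

theorem norm_of (i : ι) : ‖of R w i‖ = ‖(1 : R)‖ * w i :=
  weightedL1Seminorm_single w i 1

variable {w} {A : SNormMod R}

noncomputable def desc (a : ι → A.carrier) (ha : ∃ K : ℝ, ∀ i, ‖a i‖ ≤ K * w i) :
    weightedL1 R w ⟶ A where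
  toLinear := linearCombination R a
  bdd := by
    obtain ⟨K, ha⟩ := ha
    obtain ⟨C, hC₀, hC⟩ := A.exists_nonneg_smul_bound
    exact ⟨C * K, norm_linearCombination_le w hC₀ hC ha⟩

@[simp]
theorem desc_of (a : ι → A.carrier) (ha : ∃ K : ℝ, ∀ i, ‖a i‖ ≤ K * w i) (i : ι) :
    (desc a ha).toLinear (of R w i) = a i :=
  (linearCombination_single R 1 i).trans (one_smul R (a i))

theorem hom_ext {f g : weightedL1 R w ⟶ A}
    (h : ∀ i, f.toLinear (of R w i) = g.toLinear (of R w i)) : f = g :=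
  BddHom.ext (lhom_ext' fun i => LinearMap.ext_ring (h i))

end weightedL1

open weightedL1

variable {w} in
theorem projSN_weightedL1 (hw : ∀ i, 0 < w i) : ProjSN (weightedL1 R w) := by
  intro M N g ⟨Cg, hg⟩ h
  obtain ⟨Ch, -, hCh⟩ := h.exists_nonneg_bound
  choose a hga ha using fun i => hg (h.toLinear (of R w i)) (w i) (hw i)
  have ha_le : ∀ i, ‖a i‖ ≤ (max Cg 0 * Ch * ‖(1 : R)‖ + 1) * w i := fun i =>
    calc ‖a i‖ ≤ Cg * ‖h.toLinear (of R w i)‖ + w i := ha i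
      _ ≤ max Cg 0 * ‖h.toLinear (of R w i)‖ + w i := by gcongr; exact le_max_left _ _
      _ ≤ max Cg 0 * (Ch * ‖of R w i‖) + w i := by gcongr; exact hCh _
      _ = (max Cg 0 * Ch * ‖(1 : R)‖ + 1) * w i := by rw [norm_of]; ring
  refine ⟨desc a ⟨_, ha_le⟩, hom_ext fun i => ?_⟩
  change g.toLinear ((desc a _).toLinear (of R w i)) = _
  rw [desc_of, hga]

/-- The summands `2⁻ᵏ` play the role of the factor `R^{→0}` of the informal construction; they also
make all weights positive. -/
noncomputable def coverWeight (M : SNormMod R) (x : M.carrier × ℕ) : ℝ≥0 := ‖x.1‖₊ + 2⁻¹ ^ x.2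

theorem coe_coverWeight (M : SNormMod R) (x : M.carrier × ℕ) :
    (M.coverWeight x : ℝ) = ‖x.1‖ + 2⁻¹ ^ x.2 := by
  simp [coverWeight]

theorem coverWeight_pos (M : SNormMod R) (x : M.carrier × ℕ) : 0 < M.coverWeight x :=
  add_pos_of_nonneg_of_pos (by positivity) (by positivity)

theorem coverWeight_map_le {M N : SNormMod R} {f : M.carrier → N.carrier} {C : ℝ}
    (hf : ∀ m, ‖f m‖ ≤ C * ‖m‖) (x : M.carrier × ℕ) :
    (N.coverWeight (f x.1, x.2) : ℝ) ≤ max C 1 * M.coverWeight x := by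
  rw [coe_coverWeight, coe_coverWeight, mul_add]
  gcongr
  · exact (hf x.1).trans (by gcongr; exact le_max_left _ _)
  · exact le_mul_of_one_le_left (by positivity) (le_max_right _ _)

noncomputable abbrev cover (M : SNormMod R) : SNormMod R := weightedL1 R M.coverWeight

noncomputable def coverMap {M N : SNormMod R} (f : M ⟶ N) : M.cover ⟶ N.cover :=
  desc (fun x => of R N.coverWeight (f.toLinear x.1, x.2)) <| by
    obtain ⟨C, hC⟩ := f.bdd
    refine ⟨‖(1 : R)‖ * max C 1, fun x => ?_⟩
    rw [norm_of, mul_assoc]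
    gcongr
    exact coverWeight_map_le hC x

noncomputable def coverFunctor : SNormMod R ⥤ SNormMod R where
  obj := cover
  map := coverMap
  map_id M := hom_ext fun x => by
    change (coverMap (𝟙 M)).toLinear (of R M.coverWeight x) = of R M.coverWeight x
    rw [coverMap, desc_of]
    rfl
  map_comp f g := hom_ext fun x => by
    change (coverMap (f ≫ g)).toLinear _ = (coverMap g).toLinear ((coverMap f).toLinear _)
    rw [coverMap, coverMap, coverMap, desc_of, desc_of, desc_of]
    rfl

noncomputable def coverProj (M : SNormMod R) : M.cover ⟶ M :=
  desc Prod.fst ⟨1, fun x => by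
    rw [one_mul, coe_coverWeight]
    exact le_add_of_nonneg_right (by positivity)⟩

theorem coverProj_of (M : SNormMod R) (x : M.carrier × ℕ) :
    (coverProj M).toLinear (of R M.coverWeight x) = x.1 :=
  desc_of _ _ x

noncomputable def coverπ : coverFunctor ⟶ 𝟭 (SNormMod R) where
  app := coverProj
  naturality M N f := hom_ext fun x => by
    change (coverProj N).toLinear ((coverMap f).toLinear _) = f.toLinear ((coverProj M).toLinear _)
    rw [coverMap, desc_of, coverProj_of, coverProj_of]

theorem admEpiSN_coverπ_app (M : SNormMod R) : AdmEpiSN (coverπ.app M) := by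
  refine ⟨‖(1 : R)‖, fun m ε hε => ?_⟩
  have hsmall : Tendsto (fun k : ℕ => ‖(1 : R)‖ * 2⁻¹ ^ k) atTop (𝓝 0) := by
    simpa using (tendsto_pow_atTop_nhds_zero_of_lt_one (by norm_num : (0 : ℝ) ≤ 2⁻¹)
      (by norm_num)).const_mul ‖(1 : R)‖
  obtain ⟨k, hk⟩ := (hsmall.eventually (gt_mem_nhds hε)).exists
  refine ⟨of R M.coverWeight (m, k), coverProj_of M (m, k), ?_⟩
  change ‖of R M.coverWeight (m, k)‖ ≤ _
  rw [norm_of, coe_coverWeight, mul_add]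
  exact add_le_add_right hk.le _

end SNormMod

/-- Let `R` be a semi-normed ring. Then the category `sNorm_R` of
semi-normed `R`-modules and bounded `R`-linear maps has enough projectives, functorially:
there are a functor `P : sNorm_R ⥤ sNorm_R` (given on objects by
`P(M) = (⊕¹_{m : ρ(m) ≠ 0} R_{ρ(m)}) ⊕ (⊕¹_{m : ρ(m) = 0} R^{→0})`) and a natural
transformation `ε : P ⟶ 𝟭` such that each `P(M)` is projective and each
`ε_M : P(M) → M` is an admissible epimorphism. -/
theorem sNorm_enough_functorial_projectives :
    ∃ (P : SNormMod R ⥤ SNormMod R) (ε : P ⟶ 𝟭 (SNormMod R)),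
      ∀ M : SNormMod R, ProjSN (P.obj M) ∧ AdmEpiSN (ε.app M) :=
  ⟨SNormMod.coverFunctor, SNormMod.coverπ, fun M =>
    ⟨SNormMod.projSN_weightedL1 M.coverWeight_pos, M.admEpiSN_coverπ_app⟩⟩
end
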